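/- arXiv:1303.4032 — 11 statements merged into one kernel-verified Lean document; each statement's English description precedes it below -/
import Mathlib

section
/- Let a ≥ 5 be an odd integer. Then A_a \ A_{a-2} = { p/q : p, q are positive integers with 1 ≤ p < q, p + q = a, and gcd(p,q) = 1 }, where the set equality is between subsets of ℚ. -/
/-!
Dividing `p` and `q` by their gcd `g` keeps `p + q = g * (p' + q')` odd and does not increase it,
so `x ∈ A_a` exactly when `0 ≤ x < 1` and the height `x.num + x.den` of `x` in lowest terms is
odd and at most `a`. As `a` is odd, the only height allowed for `A_a` but not for `A_{a-2}` is `a`.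
-/

/-- The slope set `A_a`: rationals expressible as `p/q` with integers
`0 ≤ p < q ≤ a-1`, `p + q ≤ a`, and `p + q` odd. -/
def Aset (a : ℤ) : Set ℚ :=
  {x | ∃ p q : ℤ, 0 ≤ p ∧ p < q ∧ q ≤ a - 1 ∧ p + q ≤ a ∧ Odd (p + q) ∧
    x = (p : ℚ) / (q : ℚ)}

theorem mem_Aset_iff {a : ℤ} (ha : 2 ≤ a) {x : ℚ} :
    x ∈ Aset a ↔ 0 ≤ x ∧ x < 1 ∧ Odd (x.num + x.den) ∧ x.num + x.den ≤ a := by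
  constructor
  · rintro ⟨p, q, hp, hpq, -, hsum, hodd, rfl⟩
    have hq : 0 < q := hp.trans_lt hpq
    obtain ⟨c, hpc, hqc⟩ := Rat.exists_eq_mul_div_num_and_eq_mul_div_den p hq.ne'
    set y := (p : ℚ) / q
    have hc : 0 < c := pos_of_mul_pos_left (hqc ▸ hq) (by positivity)
    rw [hpc, hqc, ← mul_add] at hsum hodd
    have hy : 0 ≤ y.num + y.den := by positivity
    exact ⟨by positivity, (div_lt_one (by exact_mod_cast hq)).2 (by exact_mod_cast hpq),
      (Int.odd_mul.1 hodd).2, (le_mul_of_one_le_left hy hc).trans hsum⟩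
  · rintro ⟨h0, h1, hodd, hsum⟩
    have hnum := Rat.num_nonneg.2 h0
    refine ⟨x.num, x.den, hnum, Rat.num_lt_denom_iff.2 h1, ?_, hsum, hodd,
      (Rat.num_div_den x).symm⟩
    rcases hnum.eq_or_lt with h | h
    · rw [Rat.num_eq_zero.1 h.symm, Rat.den_zero]
      omega
    · omega

theorem exists_coprime_div_eq_iff {a : ℤ} {x : ℚ} :
    (∃ p q : ℤ, 1 ≤ p ∧ p < q ∧ p + q = a ∧ Int.gcd p q = 1 ∧ x = (p : ℚ) / (q : ℚ)) ↔
      0 < x ∧ x < 1 ∧ x.num + x.den = a := by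
  constructor
  · rintro ⟨p, q, hp, hpq, rfl, hcop, rfl⟩
    have hq : 0 < q := by omega
    rw [Rat.num_div_eq_of_coprime hq hcop, Rat.den_div_eq_of_coprime hq hcop]
    exact ⟨by positivity, (div_lt_one (by exact_mod_cast hq)).2 (by exact_mod_cast hpq), rfl⟩
  · rintro ⟨h0, h1, rfl⟩
    exact ⟨x.num, x.den, Rat.num_pos.2 h0, Rat.num_lt_denom_iff.2 h1, rfl, x.reduced,
      (Rat.num_div_den x).symm⟩

theorem Aset_diff_eq (a : ℤ) (ha_odd : Odd a) (ha : 5 ≤ a) :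
    Aset a \ Aset (a - 2) =
      {x : ℚ | ∃ p q : ℤ, 1 ≤ p ∧ p < q ∧ p + q = a ∧ Int.gcd p q = 1 ∧
        x = (p : ℚ) / (q : ℚ)} := by
  ext x
  rw [Set.mem_sdiff, mem_Aset_iff (by omega), mem_Aset_iff (by omega), Set.mem_ofPred_eq,
    exists_coprime_div_eq_iff]
  obtain ⟨k, rfl⟩ := ha_odd
  constructor
  · rintro ⟨⟨h0, h1, hodd, hle⟩, hnot⟩
    have hs : x.num + x.den = 2 * k + 1 := by
      obtain ⟨j, hj⟩ := hodd
      by_contra hne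
      exact hnot ⟨h0, h1, ⟨j, hj⟩, by omega⟩
    refine ⟨h0.lt_of_ne ?_, h1, hs⟩
    rintro rfl
    rw [Rat.num_zero, Rat.den_zero] at hs
    omega
  · rintro ⟨h0, h1, hs⟩
    exact ⟨⟨h0.le, h1, hs ▸ ⟨k, rfl⟩, hs.le⟩, fun h => by omega⟩
end

section
/- Let a ≥ 3 be an odd integer. Then A_{a-2} is a proper subset of A_a, and B_{a-2} is a proper subset of B_a (as subsets of ℚ). -/
/-- The slope set `B_a`: rationals expressible as `p/q` with odd integers
`1 ≤ p ≤ q ≤ a-2` and `p + q ≤ a-1`. -/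
def Bset (a : ℤ) : Set ℚ :=
  {x | ∃ p q : ℤ, Odd p ∧ Odd q ∧ 1 ≤ p ∧ p ≤ q ∧ q ≤ a - 2 ∧ p + q ≤ a - 1 ∧
    x = (p : ℚ) / (q : ℚ)}

/-! The new elements `1/(a-1) ∈ A_a` and `1/(a-2) ∈ B_a` are missed by `A_{a-2}` and `B_{a-2}`,
because any representation `1/n = p/q` with `q > 0` has `q = p n ≥ n`, while the denominators
allowed in `A_{a-2}` and `B_{a-2}` are at most `a-3` and `a-4`. -/

theorem Aset_mono : Monotone Aset := by
  rintro a b hab x ⟨p, q, hp, hpq, hq, hpq', hodd, rfl⟩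
  exact ⟨p, q, hp, hpq, by omega, by omega, hodd, rfl⟩

theorem Bset_mono : Monotone Bset := by
  rintro a b hab x ⟨p, q, hp, hq, hp1, hpq, hq', hpq', rfl⟩
  exact ⟨p, q, hp, hq, hp1, hpq, by omega, by omega, rfl⟩

theorem le_of_one_div_eq_div {n p q : ℤ} (hq : 0 < q) (h : (1 / n : ℚ) = p / q) : n ≤ q := by
  rcases le_or_gt n 0 with hn | hn
  · omega
  have hq_eq : q = p * n := by
    rw [div_eq_div_iff (by positivity) (by positivity)] at h
    exact_mod_cast (one_mul _).symm.trans h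
  have hp : 0 < p := pos_of_mul_pos_left (hq_eq ▸ hq) hn.le
  nlinarith

theorem one_div_notMem_Aset {b n : ℤ} (hn : b ≤ n) : (1 / n : ℚ) ∉ Aset b := by
  rintro ⟨p, q, hp, hpq, hq, -, -, h⟩
  have := le_of_one_div_eq_div (by omega) h
  omega

theorem one_div_notMem_Bset {b n : ℤ} (hn : b - 1 ≤ n) : (1 / n : ℚ) ∉ Bset b := by
  rintro ⟨p, q, -, -, hp, hpq, hq, -, h⟩
  have := le_of_one_div_eq_div (by omega) h
  omega

theorem one_div_sub_one_mem_Aset {a : ℤ} (ha_odd : Odd a) (ha : 3 ≤ a) :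
    (1 / (a - 1 : ℤ) : ℚ) ∈ Aset a :=
  ⟨1, a - 1, zero_le_one, by omega, le_rfl, by omega, by simpa using ha_odd, by simp⟩

theorem one_div_sub_two_mem_Bset {a : ℤ} (ha_odd : Odd a) (ha : 3 ≤ a) :
    (1 / (a - 2 : ℤ) : ℚ) ∈ Bset a :=
  ⟨1, a - 2, odd_one, ha_odd.sub_even even_two, le_rfl, by omega, le_rfl, by omega, by simp⟩

theorem Aset_Bset_ssubset (a : ℤ) (ha_odd : Odd a) (ha : 3 ≤ a) :
    Aset (a - 2) ⊂ Aset a ∧ Bset (a - 2) ⊂ Bset a :=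
  ⟨(Set.ssubset_iff_of_subset (Aset_mono (by omega))).2
      ⟨_, one_div_sub_one_mem_Aset ha_odd ha, one_div_notMem_Aset (by omega)⟩,
    (Set.ssubset_iff_of_subset (Bset_mono (by omega))).2
      ⟨_, one_div_sub_two_mem_Bset ha_odd ha, one_div_notMem_Bset (by omega)⟩⟩
end

section
/- Let a ≥ 3 be an odd integer, let p and q be odd positive integers, let n ≥ 1 be an integer, and let r be an odd positive integer with r ≤ 2a^n. Then the line y = (p/q)(x − r/(2a^n)) contains no point of the plane of the form (u/a^l, v/a^m) with u, v ∈ ℤ and l, m ∈ ℕ; that is, for all integers u, v and all natural numbers l, m one has (v : ℝ)/a^m ≠ (p/q) · (u/a^l − r/(2a^n)). -/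
/-!
Clearing denominators turns the equation into `v q a^l (2 a^n) = p a^m (2 u a^n - a^l r)` over `ℤ`.
The left side is even, while the right side is a product of odd numbers because `a`, `p` and `r`
are odd.
-/

lemma int_eq_of_div_pow_eq_div_mul_sub {a p q u v r : ℤ} {n l m : ℕ} (ha : a ≠ 0) (hq : q ≠ 0)
    (h : (v : ℝ) / (a : ℝ) ^ m =
      ((p : ℝ) / (q : ℝ)) * ((u : ℝ) / (a : ℝ) ^ l - (r : ℝ) / (2 * (a : ℝ) ^ n))) :
    v * q * (a ^ l * (2 * a ^ n)) = p * a ^ m * (u * (2 * a ^ n) - a ^ l * r) := by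
  have ha' : (a : ℝ) ≠ 0 := by exact_mod_cast ha
  have hq' : (q : ℝ) ≠ 0 := by exact_mod_cast hq
  field_simp at h
  apply Int.cast_injective (α := ℝ)
  push_cast
  linear_combination h

theorem line_through_shifted_base_avoids_dyadic_points_general
    (a p q : ℤ) (ha_odd : Odd a)
    (hp_odd : Odd p) (hq : 0 < q)
    (n : ℕ) (r : ℤ) (hr_odd : Odd r) :
    ∀ (u v : ℤ) (l m : ℕ),
      (v : ℝ) / (a : ℝ) ^ m ≠
        ((p : ℝ) / (q : ℝ)) * ((u : ℝ) / (a : ℝ) ^ l - (r : ℝ) / (2 * (a : ℝ) ^ n)) := by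
  intro u v l m h
  have ha : a ≠ 0 := by rintro rfl; simp at ha_odd
  have h_int := int_eq_of_div_pow_eq_div_mul_sub ha hq.ne' h
  have h_even : Even (v * q * (a ^ l * (2 * a ^ n))) := ⟨v * q * a ^ l * a ^ n, by ring⟩
  have h_odd : Odd (p * a ^ m * (u * (2 * a ^ n) - a ^ l * r)) :=
    (hp_odd.mul ha_odd.pow).mul (Even.sub_odd ⟨u * a ^ n, by ring⟩ (ha_odd.pow.mul hr_odd))
  exact Int.not_even_iff_odd.mpr h_odd (h_int ▸ h_even)

theorem line_through_shifted_base_avoids_dyadic_points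
    (a p q : ℤ) (ha_odd : Odd a) (ha : 3 ≤ a)
    (hp_odd : Odd p) (hp : 0 < p) (hq_odd : Odd q) (hq : 0 < q)
    (n : ℕ) (hn : 1 ≤ n) (r : ℤ) (hr_odd : Odd r) (hr : 0 < r)
    (hr2 : r ≤ 2 * a ^ n) :
    ∀ (u v : ℤ) (l m : ℕ),
      (v : ℝ) / (a : ℝ) ^ m ≠
        ((p : ℝ) / (q : ℝ)) * ((u : ℝ) / (a : ℝ) ^ l - (r : ℝ) / (2 * (a : ℝ) ^ n)) :=
  line_through_shifted_base_avoids_dyadic_points_general a p q ha_odd hp_odd hq n r hr_odd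
end

section
/- Let a ≥ 3 be an odd integer, let p and q be odd positive integers, let n ≥ 1 be an integer, and let r be an odd positive integer with r ≤ 2a^n. Then for every natural number N, all integers U, V, and all choices of signs ε, δ ∈ {−1, +1}, the point ((2aU + a + ε)/(2a^{N+1}), (2aV + a + δ)/(2a^{N+1})) does not lie on the line y = (p/q)(x − r/(2a^n)). In other words, a line of slope p/q ∈ B_a based at (r/(2a^n), 0) passes through no corner of any peripheral square of the Sierpinski carpet S_a, of any size. -/
/-!
Clearing denominators turns a corner lying on the line into the integer identity
`q (2aV + a + δ) aⁿ = p ((2aU + a + ε) aⁿ - r a^(N+1))`. With `a`, `ε`, `δ` odd the numbers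
`2aU + a + ε` and `2aV + a + δ` are even, so the left side is even, while for `p`, `r` odd the
right side is `p` times even minus odd, hence odd.
-/

lemma Int.ne_zero_of_odd {a : ℤ} (ha : Odd a) : a ≠ 0 := by
  rintro rfl
  exact Int.not_odd_zero ha

lemma even_two_mul_mul_add_add {a ε : ℤ} (ha : Odd a) (hε : Odd ε) (U : ℤ) :
    Even (2 * a * U + a + ε) := by
  rw [add_assoc]
  exact ((even_two_mul a).mul_right U).add (ha.add_odd hε)

lemma int_eq_of_corner_on_line {a p q r X Y : ℤ} {n N : ℕ} (ha : a ≠ 0) (hq : q ≠ 0)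
    (h : (X : ℝ) / (2 * (a : ℝ) ^ (N + 1)) =
      ((p : ℝ) / (q : ℝ)) * ((Y : ℝ) / (2 * (a : ℝ) ^ (N + 1)) - (r : ℝ) / (2 * (a : ℝ) ^ n))) :
    q * X * a ^ n = p * (Y * a ^ n - r * a ^ (N + 1)) := by
  have ha' : (a : ℝ) ≠ 0 := by exact_mod_cast ha
  have hq' : (q : ℝ) ≠ 0 := by exact_mod_cast hq
  field_simp at h
  have h' : ((q * X * a ^ n : ℤ) : ℝ) = ((p * (Y * a ^ n - r * a ^ (N + 1)) : ℤ) : ℝ) := by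
    push_cast
    linear_combination h
  exact_mod_cast h'

theorem Bslope_line_avoids_peripheral_corners_general
    (a p q : ℤ) (ha_odd : Odd a)
    (hp_odd : Odd p) (hq_odd : Odd q)
    (n : ℕ) (r : ℤ) (hr_odd : Odd r) :
    ∀ (N : ℕ) (U V : ℤ) (ε δ : ℤ), (ε = -1 ∨ ε = 1) → (δ = -1 ∨ δ = 1) →
      ((2 * a * V + a + δ : ℤ) : ℝ) / (2 * (a : ℝ) ^ (N + 1)) ≠
        ((p : ℝ) / (q : ℝ)) *
          (((2 * a * U + a + ε : ℤ) : ℝ) / (2 * (a : ℝ) ^ (N + 1)) -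
            (r : ℝ) / (2 * (a : ℝ) ^ n)) := by
  intro N U V ε δ hε hδ hline
  have odd_of_sign : ∀ s : ℤ, (s = -1 ∨ s = 1) → Odd s := by
    rintro s (rfl | rfl) <;> decide
  have hV := even_two_mul_mul_add_add ha_odd (odd_of_sign δ hδ) V
  have hU := even_two_mul_mul_add_add ha_odd (odd_of_sign ε hε) U
  have hint :=
    int_eq_of_corner_on_line (Int.ne_zero_of_odd ha_odd) (Int.ne_zero_of_odd hq_odd) hline
  have hlhs_even : Even (q * (2 * a * V + a + δ) * a ^ n) := (hV.mul_left q).mul_right _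
  have hrhs_odd : Odd (p * ((2 * a * U + a + ε) * a ^ n - r * a ^ (N + 1))) :=
    hp_odd.mul ((hU.mul_right _).sub_odd (hr_odd.mul ha_odd.pow))
  exact Int.not_even_iff_odd.2 hrhs_odd (hint ▸ hlhs_even)

theorem Bslope_line_avoids_peripheral_corners
    (a p q : ℤ) (ha_odd : Odd a) (ha : 3 ≤ a)
    (hp_odd : Odd p) (hp : 0 < p) (hq_odd : Odd q) (hq : 0 < q)
    (n : ℕ) (hn : 1 ≤ n) (r : ℤ) (hr_odd : Odd r) (hr : 0 < r)
    (hr2 : r ≤ 2 * a ^ n) :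
    ∀ (N : ℕ) (U V : ℤ) (ε δ : ℤ), (ε = -1 ∨ ε = 1) → (δ = -1 ∨ δ = 1) →
      ((2 * a * V + a + δ : ℤ) : ℝ) / (2 * (a : ℝ) ^ (N + 1)) ≠
        ((p : ℝ) / (q : ℝ)) *
          (((2 * a * U + a + ε : ℤ) : ℝ) / (2 * (a : ℝ) ^ (N + 1)) -
            (r : ℝ) / (2 * (a : ℝ) ^ n)) :=
  Bslope_line_avoids_peripheral_corners_general a p q ha_odd hp_odd hq_odd n r hr_odd
end

section
/- Let a ≥ 3 be an odd integer and let p, q be positive integers with p < q, p + q = a, and gcd(p,q) = 1. Then there exist natural numbers u, v with v ≤ u ≤ q − 1 such that p·(2au + a + 1) = q·(2av + a − 1); moreover v < u unless u = v = 0. Equivalently, the line y = (p/q)x through the origin passes through the point ((2au + a + 1)/(2a²), (2av + a − 1)/(2a²)), which is the inferior (lower-right) corner of a peripheral square of the Sierpinski carpet S_a. -/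
/-!
Writing `a = p + q` and `q - p - 1 = 2m`, the corner equation
`p (2au + a + 1) = q (2av + a - 1)` reduces to `p u - q v = m`. Since `p` is invertible
modulo `q`, this has a solution with `0 ≤ u < q`, and the bounds `0 ≤ m < q`, `p < q`
then force `0 ≤ v` and `v < u` unless `u = v = 0`.
-/

namespace Int

theorem exists_mul_sub_mul_eq_of_isCoprime {p q : ℤ} (h : IsCoprime p q) (hq : 0 < q) (m : ℤ) :
    ∃ u v : ℤ, 0 ≤ u ∧ u < q ∧ p * u - q * v = m := by
  obtain ⟨x, y, hxy⟩ := h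
  refine ⟨m * x % q, -(m * y) - p * (m * x / q), emod_nonneg _ hq.ne', emod_lt_of_pos _ hq, ?_⟩
  rw [emod_def]
  linear_combination m * hxy

variable {p q u v m : ℤ}

theorem nonneg_of_mul_sub_mul_eq (hp : 0 ≤ p) (hq : 0 < q) (hu : 0 ≤ u) (hmq : m < q)
    (h : p * u - q * v = m) : 0 ≤ v := by
  by_contra! hv
  nlinarith [mul_nonneg hp hu, mul_le_mul_of_nonneg_left (show v ≤ -1 by omega) hq.le]

theorem lt_or_eq_zero_of_mul_sub_mul_eq (hq : 0 < q) (hpq : p < q) (hu : 0 ≤ u) (hv : 0 ≤ v)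
    (hm : 0 ≤ m) (h : p * u - q * v = m) : (u = 0 ∧ v = 0) ∨ v < u := by
  rcases hu.eq_or_lt with rfl | hu
  · left
    exact ⟨rfl, by nlinarith⟩
  · right
    nlinarith [mul_lt_mul_of_pos_right hpq hu]

theorem corner_eq_of_mul_sub_mul_eq {a : ℤ} (hsum : p + q = a) (hm : q - p - 1 = 2 * m)
    (h : p * u - q * v = m) : p * (2 * a * u + a + 1) = q * (2 * a * v + a - 1) := by
  subst hsum
  linear_combination 2 * (p + q) * h - (p + q) * hm

end Int

theorem Aslope_new_line_hits_inferior_right_corner_general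
    (a p q : ℤ) (ha_odd : Odd a)
    (hp : 0 < p) (hpq : p < q) (hsum : p + q = a) (hcop : Int.gcd p q = 1) :
    ∃ u v : ℕ, (v : ℤ) ≤ (u : ℤ) ∧ (u : ℤ) ≤ q - 1 ∧
      p * (2 * a * (u : ℤ) + a + 1) = q * (2 * a * (v : ℤ) + a - 1) ∧
      ((u = 0 ∧ v = 0) ∨ v < u) := by
  obtain ⟨k, hk⟩ := ha_odd
  have hm : q - p - 1 = 2 * (k - p) := by omega
  have hq : 0 < q := hp.trans hpq
  obtain ⟨u, v, hu, huq, huv⟩ := Int.exists_mul_sub_mul_eq_of_isCoprime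
    (Int.isCoprime_iff_gcd_eq_one.mpr hcop) hq (k - p)
  have hv := Int.nonneg_of_mul_sub_mul_eq hp.le hq hu (by omega) huv
  have hcases := Int.lt_or_eq_zero_of_mul_sub_mul_eq hq hpq hu hv (by omega) huv
  lift u to ℕ using hu
  lift v to ℕ using hv
  refine ⟨u, v, by omega, by omega, Int.corner_eq_of_mul_sub_mul_eq hsum hm huv, ?_⟩
  exact_mod_cast hcases

theorem Aslope_new_line_hits_inferior_right_corner
    (a p q : ℤ) (ha_odd : Odd a) (ha : 3 ≤ a)
    (hp : 0 < p) (hpq : p < q) (hsum : p + q = a) (hcop : Int.gcd p q = 1) :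
    ∃ u v : ℕ, (v : ℤ) ≤ (u : ℤ) ∧ (u : ℤ) ≤ q - 1 ∧
      p * (2 * a * (u : ℤ) + a + 1) = q * (2 * a * (v : ℤ) + a - 1) ∧
      ((u = 0 ∧ v = 0) ∨ v < u) :=
  Aslope_new_line_hits_inferior_right_corner_general a p q ha_odd hp hpq hsum hcop
end

section
/- Let a ≥ 3 be an odd integer and let p, q be integers with 0 ≤ p < q, p + q odd, and p + q ≤ a − 2. Then for all natural numbers u, v and all choices of signs ε, δ ∈ {−1, +1}, one has p·(2au + a + ε) ≠ q·(2av + a + δ). Equivalently, the line y = (p/q)x through the origin passes through no corner of any peripheral square of the Sierpinski carpet S_a. -/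
/-!
Subtracting the two sides of `p (2au + a + ε) = q (2av + a + δ)` shows that `a` divides
`p ε - q δ`. This number is odd, since it has the parity of `p + q`, hence nonzero; but its
absolute value is at most `p + q < a`, so it cannot be a nonzero multiple of `a`.
-/

theorem dvd_mul_sub_mul_of_corner_eq {R : Type*} [CommRing R] {a p q u v ε δ : R}
    (h : p * (2 * a * u + a + ε) = q * (2 * a * v + a + δ)) : a ∣ p * ε - q * δ :=
  ⟨2 * (q * v - p * u) + q - p, by linear_combination h⟩

theorem Int.odd_mul_sub_mul_of_odd_add {p q ε δ : ℤ} (hpq : Odd (p + q)) (hε : Odd ε)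
    (hδ : Odd δ) : Odd (p * ε - q * δ) := by
  rw [Int.odd_sub, Int.odd_mul, Int.even_mul, ← Int.not_odd_iff_even, ← Int.not_odd_iff_even]
  rw [Int.odd_add] at hpq
  simpa [hε, hδ, ← Int.not_odd_iff_even] using hpq

theorem abs_mul_sub_mul_le_of_abs_eq_one {R : Type*} [Ring R] [LinearOrder R] [IsOrderedRing R]
    {p q ε δ : R} (hε : |ε| = 1) (hδ : |δ| = 1) : |p * ε - q * δ| ≤ |p| + |q| := by
  simpa [abs_mul, hε, hδ] using abs_sub (p * ε) (q * δ)

theorem Aslope_old_line_avoids_peripheral_corners_general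
    (a p q : ℤ)
    (hp : 0 ≤ p) (hpq : p < q) (hodd : Odd (p + q)) (hsum : p + q ≤ a - 2) :
    ∀ (u v : ℕ) (ε δ : ℤ), (ε = -1 ∨ ε = 1) → (δ = -1 ∨ δ = 1) →
      p * (2 * a * (u : ℤ) + a + ε) ≠ q * (2 * a * (v : ℤ) + a + δ) := by
  intro u v ε δ hε hδ h
  have hε_odd : Odd ε := by rcases hε with rfl | rfl <;> decide
  have hδ_odd : Odd δ := by rcases hδ with rfl | rfl <;> decide
  have hlt : |p * ε - q * δ| < a := calc
    |p * ε - q * δ| ≤ |p| + |q| := abs_mul_sub_mul_le_of_abs_eq_one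
      ((abs_eq zero_le_one).2 hε.symm) ((abs_eq zero_le_one).2 hδ.symm)
    _ = p + q := by rw [abs_of_nonneg hp, abs_of_nonneg (by omega)]
    _ < a := by omega
  have hzero := Int.eq_zero_of_abs_lt_dvd (dvd_mul_sub_mul_of_corner_eq h) hlt
  exact Int.not_odd_zero (hzero ▸ Int.odd_mul_sub_mul_of_odd_add hodd hε_odd hδ_odd)

theorem Aslope_old_line_avoids_peripheral_corners
    (a p q : ℤ) (ha_odd : Odd a) (ha : 3 ≤ a)
    (hp : 0 ≤ p) (hpq : p < q) (hodd : Odd (p + q)) (hsum : p + q ≤ a - 2) :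
    ∀ (u v : ℕ) (ε δ : ℤ), (ε = -1 ∨ ε = 1) → (δ = -1 ∨ δ = 1) →
      p * (2 * a * (u : ℤ) + a + ε) ≠ q * (2 * a * (v : ℤ) + a + δ) :=
  Aslope_old_line_avoids_peripheral_corners_general a p q hp hpq hodd hsum
end

section
/- Let a ≥ 3 be an odd integer and let p, q be integers with 0 ≤ p < q, p + q odd, and p + q ≤ a − 2. Then the line L = {(x, y) ∈ ℝ² : p·x = q·y} is disjoint from the closed square Q(a,N,U,V) for every natural number N and all integers U, V. In particular, a line through the origin with slope in A_{a−2} is disjoint from every peripheral square of the Sierpinski carpet S_a. -/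
/-- The closed axis-parallel square with center `((2U+1)/(2a^N), (2V+1)/(2a^N))`
and side length `1/a^(N+1)`; for `0 ≤ U, V ≤ a^N - 1` these are the squares
removed at stage `N+1` of the construction of the Sierpinski carpet `S_a`. -/
def carpetSquare (a : ℤ) (N : ℕ) (U V : ℤ) : Set (ℝ × ℝ) :=
  {z | |z.1 - (2 * (U : ℝ) + 1) / (2 * (a : ℝ) ^ N)| ≤ 1 / (2 * (a : ℝ) ^ (N + 1)) ∧
       |z.2 - (2 * (V : ℝ) + 1) / (2 * (a : ℝ) ^ N)| ≤ 1 / (2 * (a : ℝ) ^ (N + 1))}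

/-! On the line `p x = q y` the form `p x - q y` vanishes, while at the centre of `Q(a,N,U,V)` it
equals `K / (2 aᴺ)` with `K = p (2U+1) - q (2V+1) ≡ p + q (mod 2)` odd, so `|K| ≥ 1`. The square is
the sup-norm ball of radius `1 / (2 aᴺ⁺¹)`, on which the form moves by at most
`(p + q) / (2 aᴺ⁺¹) < 1 / (2 aᴺ)`. -/

open Metric

theorem carpetSquare_eq_closedBall (a : ℤ) (N : ℕ) (U V : ℤ) :
    carpetSquare a N U V =
      closedBall ((2 * (U : ℝ) + 1) / (2 * (a : ℝ) ^ N), (2 * (V : ℝ) + 1) / (2 * (a : ℝ) ^ N))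
        (1 / (2 * (a : ℝ) ^ (N + 1))) := by
  ext z
  rw [mem_closedBall, Prod.dist_eq, max_le_iff]
  rfl

theorem disjoint_setOf_mul_eq_mul_closedBall {p q u v r : ℝ}
    (h : (|p| + |q|) * r < |p * u - q * v|) :
    Disjoint {z : ℝ × ℝ | p * z.1 = q * z.2} (closedBall (u, v) r) := by
  refine Set.disjoint_left.2 fun z (hz : p * z.1 = q * z.2) hzr => h.not_ge ?_
  obtain ⟨hz₁, hz₂⟩ : |z.1 - u| ≤ r ∧ |z.2 - v| ≤ r := by
    rwa [mem_closedBall, Prod.dist_eq, max_le_iff] at hzr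
  calc |p * u - q * v| = |p * (z.1 - u) - q * (z.2 - v)| := by
        rw [← abs_neg]; congr 1; linear_combination -hz
    _ ≤ |p| * |z.1 - u| + |q| * |z.2 - v| := by
        simpa only [abs_mul] using abs_sub (p * (z.1 - u)) (q * (z.2 - v))
    _ ≤ |p| * r + |q| * r := by gcongr
    _ = (|p| + |q|) * r := by ring

theorem Int.one_le_abs_mul_two_add_one_sub {p q : ℤ} (hodd : Odd (p + q)) (U V : ℤ) :
    1 ≤ |p * (2 * U + 1) - q * (2 * V + 1)| := by
  have hK : Odd (p * (2 * U + 1) - q * (2 * V + 1)) := by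
    rw [show p * (2 * U + 1) - q * (2 * V + 1) = p + q + 2 * (p * U - q * V - q) by ring]
    exact hodd.add_even (even_two_mul _)
  exact Int.one_le_abs fun h => by simp [h] at hK

theorem Aslope_old_line_disjoint_from_peripheral_squares_general
    (a p q : ℤ)
    (hp : 0 ≤ p) (hpq : p < q) (hodd : Odd (p + q)) (hsum : p + q ≤ a - 2) :
    ∀ (N : ℕ) (U V : ℤ),
      Disjoint {z : ℝ × ℝ | (p : ℝ) * z.1 = (q : ℝ) * z.2} (carpetSquare a N U V) := by
  intro N U V
  rw [carpetSquare_eq_closedBall]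
  apply disjoint_setOf_mul_eq_mul_closedBall
  have hpq_lt : ((p : ℝ) + q) < a := by exact_mod_cast (by omega : p + q < a)
  have ha : (0 : ℝ) < a := by exact_mod_cast (by omega : 0 < a)
  have hc : (0 : ℝ) < 2 * (a : ℝ) ^ N := by positivity
  have hK : (1 : ℝ) ≤ |(p : ℝ) * (2 * U + 1) - q * (2 * V + 1)| := by
    exact_mod_cast Int.one_le_abs_mul_two_add_one_sub hodd U V
  rw [abs_of_nonneg (by exact_mod_cast hp : (0 : ℝ) ≤ p),
    abs_of_nonneg (by exact_mod_cast hp.trans hpq.le : (0 : ℝ) ≤ q)]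
  calc ((p : ℝ) + q) * (1 / (2 * (a : ℝ) ^ (N + 1)))
      = ((p + q) / a) / (2 * (a : ℝ) ^ N) := by rw [pow_succ]; field_simp
    _ < 1 / (2 * (a : ℝ) ^ N) := by
        gcongr
        exact (div_lt_one ha).2 hpq_lt
    _ ≤ |(p : ℝ) * (2 * U + 1) - q * (2 * V + 1)| / (2 * (a : ℝ) ^ N) := by gcongr
    _ = |p * ((2 * U + 1) / (2 * (a : ℝ) ^ N)) - q * ((2 * V + 1) / (2 * (a : ℝ) ^ N))| := by
        rw [← abs_of_pos hc, ← abs_div, abs_of_pos hc]; congr 1; field_simp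

theorem Aslope_old_line_disjoint_from_peripheral_squares
    (a p q : ℤ) (ha_odd : Odd a) (ha : 3 ≤ a)
    (hp : 0 ≤ p) (hpq : p < q) (hodd : Odd (p + q)) (hsum : p + q ≤ a - 2) :
    ∀ (N : ℕ) (U V : ℤ),
      Disjoint {z : ℝ × ℝ | (p : ℝ) * z.1 = (q : ℝ) * z.2} (carpetSquare a N U V) :=
  Aslope_old_line_disjoint_from_peripheral_squares_general a p q hp hpq hodd hsum
end

section
/- Let a ≥ 3 be an odd integer and let p, q be positive integers with p < q and p + q = a. If a point of the line L = {(x, y) ∈ ℝ² : p·x = q·y} lies in the closed square Q(a,N,U,V) for some natural number N and integers U, V, then that point is either the lower-right corner ((2aU + a + 1)/(2a^{N+1}), (2aV + a − 1)/(2a^{N+1})) or the upper-left corner ((2aU + a − 1)/(2a^{N+1}), (2aV + a + 1)/(2a^{N+1})) of Q(a,N,U,V). In particular, a line through the origin with slope in A_a \ A_{a−2} can meet a peripheral square of the Sierpinski carpet S_a only at one of these two corners. -/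
lemma abs_sub_carpetCenter_le_iff {a : ℝ} (ha : 0 < a) (N : ℕ) (U x : ℝ) :
    |x - (2 * U + 1) / (2 * a ^ N)| ≤ 1 / (2 * a ^ (N + 1)) ↔
      |2 * a ^ (N + 1) * x - (2 * a * U + a)| ≤ 1 := by
  have hr : 0 < 2 * a ^ (N + 1) := by positivity
  rw [← mul_le_mul_iff_of_pos_left hr, ← abs_of_pos hr, ← abs_mul, abs_of_pos hr]
  congr! 1
  · rw [pow_succ]; congr 1; field_simp
  · field_simp

lemma abs_mul_sub_mul_le_add {p q s t : ℝ} (hp : 0 ≤ p) (hq : 0 ≤ q) (hs : |s| ≤ 1)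
    (ht : |t| ≤ 1) : |p * s - q * t| ≤ p + q := by
  calc |p * s - q * t| ≤ |p * s| + |q * t| := abs_sub _ _
    _ = p * |s| + q * |t| := by rw [abs_mul, abs_mul, abs_of_nonneg hp, abs_of_nonneg hq]
    _ ≤ p * 1 + q * 1 := by gcongr
    _ = p + q := by ring

lemma eq_one_and_eq_neg_one_of_mul_sub_mul_eq_add {p q s t : ℝ} (hp : 0 < p) (hq : 0 < q)
    (hs : |s| ≤ 1) (ht : |t| ≤ 1) (h : p * s - q * t = p + q) : s = 1 ∧ t = -1 := by
  obtain ⟨-, hs⟩ := abs_le.mp hs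
  obtain ⟨ht, -⟩ := abs_le.mp ht
  constructor <;> nlinarith

lemma Int.eq_one_or_eq_neg_one_of_odd_of_abs_le_one {m : ℤ} (hm : Odd m) (h : |m| ≤ 1) :
    m = 1 ∨ m = -1 := by
  obtain ⟨k, rfl⟩ := hm
  rw [abs_le] at h
  omega

lemma eq_pm_one_of_mul_sub_mul_eq_add_mul_odd {p q s t : ℝ} (hp : 0 < p) (hq : 0 < q)
    (hs : |s| ≤ 1) (ht : |t| ≤ 1) {m : ℤ} (hm : Odd m) (h : p * s - q * t = (p + q) * m) :
    (s = 1 ∧ t = -1) ∨ (s = -1 ∧ t = 1) := by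
  have hm1 : |m| ≤ 1 := by
    have := abs_mul_sub_mul_le_add hp.le hq.le hs ht
    rw [h, abs_mul, abs_of_pos (by positivity)] at this
    exact_mod_cast (mul_le_iff_le_one_right (by positivity)).mp this
  rcases Int.eq_one_or_eq_neg_one_of_odd_of_abs_le_one hm hm1 with rfl | rfl
  · left
    exact eq_one_and_eq_neg_one_of_mul_sub_mul_eq_add hp hq hs ht (by simpa using h)
  · right
    have := eq_one_and_eq_neg_one_of_mul_sub_mul_eq_add hp hq (s := -s) (t := -t)
      (by rwa [abs_neg]) (by rwa [abs_neg]) (by push_cast at h; linarith)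
    constructor <;> linarith [this.1, this.2]

lemma Int.odd_mul_sub_mul_of_odd_add_s10 {p q m n : ℤ} (h : Odd (p + q)) (hm : Odd m) (hn : Odd n) :
    Odd (q * m - p * n) := by
  rw [show q * m - p * n = (p + q) * m - p * (m + n) by ring]
  exact (h.mul hm).sub_even ((hm.add_odd hn).mul_left p)

theorem Aslope_new_line_meets_squares_only_at_corners_general
    (a p q : ℤ) (ha_odd : Odd a)
    (hp : 0 < p) (hpq : p < q) (hsum : p + q = a)
    (N : ℕ) (U V : ℤ) (z : ℝ × ℝ)
    (hline : (p : ℝ) * z.1 = (q : ℝ) * z.2)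
    (hz : z ∈ carpetSquare a N U V) :
    z = (((2 * a * U + a + 1 : ℤ) : ℝ) / (2 * (a : ℝ) ^ (N + 1)),
         ((2 * a * V + a - 1 : ℤ) : ℝ) / (2 * (a : ℝ) ^ (N + 1))) ∨
    z = (((2 * a * U + a - 1 : ℤ) : ℝ) / (2 * (a : ℝ) ^ (N + 1)),
         ((2 * a * V + a + 1 : ℤ) : ℝ) / (2 * (a : ℝ) ^ (N + 1))) := by
  have hp' : (0 : ℝ) < p := by exact_mod_cast hp
  have hq' : (0 : ℝ) < q := by exact_mod_cast hp.trans hpq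
  have hsum' : (p : ℝ) + q = a := by exact_mod_cast hsum
  have ha : (0 : ℝ) < a := by linarith
  set s : ℝ := 2 * (a : ℝ) ^ (N + 1) * z.1 - (2 * a * U + a)
  set t : ℝ := 2 * (a : ℝ) ^ (N + 1) * z.2 - (2 * a * V + a)
  obtain ⟨hs, ht⟩ : |s| ≤ 1 ∧ |t| ≤ 1 := by
    simpa only [carpetSquare, Set.mem_ofPred_eq, abs_sub_carpetCenter_le_iff ha] using hz
  have hm : Odd (q * (2 * V + 1) - p * (2 * U + 1)) :=
    Int.odd_mul_sub_mul_of_odd_add_s10 (hsum ▸ ha_odd) (odd_two_mul_add_one V) (odd_two_mul_add_one U)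
  have hkey : p * s - q * t = (p + q) * ((q * (2 * V + 1) - p * (2 * U + 1) : ℤ) : ℝ) := by
    push_cast
    linear_combination
      (2 * (a : ℝ) ^ (N + 1)) * hline - (q * (2 * V + 1) - p * (2 * U + 1)) * hsum'
  have hr : (2 * (a : ℝ) ^ (N + 1)) ≠ 0 := by positivity
  rcases eq_pm_one_of_mul_sub_mul_eq_add_mul_odd hp' hq' hs ht hm hkey with
    ⟨hs1, ht1⟩ | ⟨hs1, ht1⟩
  · left
    refine Prod.ext ?_ ?_ <;> push_cast <;> rw [eq_div_iff hr] <;> linarith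
  · right
    refine Prod.ext ?_ ?_ <;> push_cast <;> rw [eq_div_iff hr] <;> linarith

theorem Aslope_new_line_meets_squares_only_at_corners
    (a p q : ℤ) (ha_odd : Odd a) (ha : 3 ≤ a)
    (hp : 0 < p) (hpq : p < q) (hsum : p + q = a)
    (N : ℕ) (U V : ℤ) (z : ℝ × ℝ)
    (hline : (p : ℝ) * z.1 = (q : ℝ) * z.2)
    (hz : z ∈ carpetSquare a N U V) :
    z = (((2 * a * U + a + 1 : ℤ) : ℝ) / (2 * (a : ℝ) ^ (N + 1)),
         ((2 * a * V + a - 1 : ℤ) : ℝ) / (2 * (a : ℝ) ^ (N + 1))) ∨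
    z = (((2 * a * U + a - 1 : ℤ) : ℝ) / (2 * (a : ℝ) ^ (N + 1)),
         ((2 * a * V + a + 1 : ℤ) : ℝ) / (2 * (a : ℝ) ^ (N + 1))) :=
  Aslope_new_line_meets_squares_only_at_corners_general a p q ha_odd hp hpq hsum N U V z hline hz
end

section
/- Let a ≥ 3 be an odd integer, let p, q be odd positive integers with p ≤ q and p + q ≤ a − 1, let n ≥ 1 be an integer, and let r be an odd positive integer with r ≤ 2a^n. Then the line L = {(x, y) ∈ ℝ² : q·y = p·(x − r/(2a^n))} is disjoint from the closed square Q(a,N,U,V) for every integer N ≥ n and all integers U, V. In particular, a line through (r/(2a^n), 0) with slope in B_a is disjoint from every peripheral square of the Sierpinski carpet S_a of side length less than 1/a^n. -/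
lemma abs_mul_sub_mul_le_of_abs_le {x y c₁ c₂ h p q : ℝ} (hp : 0 ≤ p) (hq : 0 ≤ q)
    (hx : |x - c₁| ≤ h) (hy : |y - c₂| ≤ h) :
    |q * (y - c₂) - p * (x - c₁)| ≤ (p + q) * h :=
  calc |q * (y - c₂) - p * (x - c₁)| ≤ |q * (y - c₂)| + |p * (x - c₁)| := abs_sub _ _
    _ = q * |y - c₂| + p * |x - c₁| := by
      rw [abs_mul, abs_mul, abs_of_nonneg hq, abs_of_nonneg hp]
    _ ≤ q * h + p * h := by gcongr
    _ = (p + q) * h := by ring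

lemma one_le_abs_of_odd {K : ℤ} (hK : Odd K) : (1 : ℝ) ≤ |(K : ℝ)| := by
  have hK0 : K ≠ 0 := by rintro rfl; exact Int.not_odd_zero hK
  exact_mod_cast Int.one_le_abs hK0

lemma odd_mul_two_mul_add_one_sub_add {a p q r : ℤ} (ha : Odd a) (hp : Odd p) (hq : Odd q)
    (hr : Odd r) (U V : ℤ) (k : ℕ) :
    Odd (q * (2 * V + 1) - p * (2 * U + 1) + p * r * a ^ k) :=
  ((hq.mul (odd_two_mul_add_one V)).sub_odd (hp.mul (odd_two_mul_add_one U))).add_odd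
    ((hp.mul hr).mul ha.pow)

lemma line_form_at_square_center {a p q r U V : ℝ} (ha : a ≠ 0) (n k : ℕ) :
    q * ((2 * V + 1) / (2 * a ^ (n + k))) - p * ((2 * U + 1) / (2 * a ^ (n + k)) - r / (2 * a ^ n))
      = (q * (2 * V + 1) - p * (2 * U + 1) + p * r * a ^ k) / (2 * a ^ (n + k)) := by
  rw [pow_add]
  field_simp
  ring

lemma mul_half_side_lt_div {a s K : ℝ} (ha : 0 < a) (hs : s ≤ a - 1) (hK : 1 ≤ K) (N : ℕ) :
    s * (1 / (2 * a ^ (N + 1))) < K / (2 * a ^ N) :=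
  calc s * (1 / (2 * a ^ (N + 1))) ≤ (a - 1) / (2 * a ^ (N + 1)) := by
        rw [mul_one_div]; gcongr
    _ < a / (2 * a ^ (N + 1)) := by gcongr; linarith
    _ = 1 / (2 * a ^ N) := by rw [pow_succ]; field_simp
    _ ≤ K / (2 * a ^ N) := by gcongr

theorem Bslope_line_disjoint_from_small_peripheral_squares_general
    (a p q : ℤ) (ha_odd : Odd a)
    (hp_odd : Odd p) (hq_odd : Odd q) (hp : 0 < p) (hpq : p ≤ q)
    (hsum : p + q ≤ a - 1)
    (n : ℕ) (r : ℤ) (hr_odd : Odd r) :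
    ∀ (N : ℕ), n ≤ N → ∀ (U V : ℤ),
      Disjoint
        {z : ℝ × ℝ | (q : ℝ) * z.2 = (p : ℝ) * (z.1 - (r : ℝ) / (2 * (a : ℝ) ^ n))}
        (carpetSquare a N U V) := by
  intro N hN U V
  obtain ⟨k, rfl⟩ := Nat.exists_eq_add_of_le hN
  have ha : (0 : ℝ) < a := by exact_mod_cast (by omega : 0 < a)
  have hsumR : (p + q : ℝ) ≤ a - 1 := by exact_mod_cast hsum
  set K : ℤ := q * (2 * V + 1) - p * (2 * U + 1) + p * r * a ^ k
  refine Set.disjoint_left.2 fun z (hline : _ = _) ⟨hx, hy⟩ => ?_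
  have hcenter : (K : ℝ) / (2 * a ^ (n + k)) =
      -(q * (z.2 - (2 * V + 1) / (2 * a ^ (n + k)))
        - p * (z.1 - (2 * U + 1) / (2 * a ^ (n + k)))) := by
    push_cast [K]
    linear_combination hline - line_form_at_square_center (q := (q : ℝ)) (p := p) (r := r)
      (U := U) (V := V) ha.ne' n k
  have hbound := abs_mul_sub_mul_le_of_abs_le (p := (p : ℝ)) (q := (q : ℝ))
    (by exact_mod_cast hp.le) (by exact_mod_cast (hp.trans_le hpq).le) hx hy
  rw [← abs_neg, ← hcenter, abs_div, abs_of_pos (mul_pos two_pos (pow_pos ha _))] at hbound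
  have hK : (1 : ℝ) ≤ |(K : ℝ)| :=
    one_le_abs_of_odd (odd_mul_two_mul_add_one_sub_add ha_odd hp_odd hq_odd hr_odd U V k)
  exact (hbound.trans_lt (mul_half_side_lt_div ha hsumR hK _)).false

theorem Bslope_line_disjoint_from_small_peripheral_squares
    (a p q : ℤ) (ha_odd : Odd a) (ha : 3 ≤ a)
    (hp_odd : Odd p) (hq_odd : Odd q) (hp : 0 < p) (hpq : p ≤ q)
    (hsum : p + q ≤ a - 1)
    (n : ℕ) (hn : 1 ≤ n) (r : ℤ) (hr_odd : Odd r) (hr : 0 < r)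
    (hr2 : r ≤ 2 * a ^ n) :
    ∀ (N : ℕ), n ≤ N → ∀ (U V : ℤ),
      Disjoint
        {z : ℝ × ℝ | (q : ℝ) * z.2 = (p : ℝ) * (z.1 - (r : ℝ) / (2 * (a : ℝ) ^ n))}
        (carpetSquare a N U V) :=
  Bslope_line_disjoint_from_small_peripheral_squares_general a p q ha_odd hp_odd hq_odd hp hpq hsum
    n r hr_odd
end

section
/- Let a ≥ 3 be an odd integer, let p, q be integers with 0 ≤ p < q, p + q odd, and p + q ≤ a − 2, let m be a natural number, and let k be an integer. Then the line L = {(x, y) ∈ ℝ² : q·y = p·(x − k/a^m)} is disjoint from the closed square Q(a,N,U,V) for every integer N ≥ m and all integers U, V. In particular, a line through (k/a^m, 0) with slope in A_{a−2} is disjoint from every peripheral square of the Sierpinski carpet S_a whose side length is less than 1/a^m. -/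
/-!
Scale by `2 a^N`. On the line, `2 a^N (q y - p x) = -2 p k a^(N-m)` is an even integer, because
`m ≤ N`; at the centre of the square the same expression is `q (2V+1) - p (2U+1)`, an odd integer
because `p + q` is odd. So the two values differ by at least `1`, whereas moving inside the square
changes the expression by at most `(p + q) / a < 1`.
-/

theorem abs_mul_sub_le_of_abs_sub_div_le {c t s e : ℝ} (hc : 0 < c) (h : |t - s / c| ≤ e) :
    |c * t - s| ≤ c * e := by
  have hfactor : c * t - s = c * (t - s / c) := by field_simp
  rw [hfactor, abs_mul, abs_of_pos hc]
  exact mul_le_mul_of_nonneg_left h hc.le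

theorem abs_scaled_sub_center_le_of_mem_carpetSquare {a : ℤ} {N : ℕ} {U V : ℤ}
    {z : ℝ × ℝ} (ha : (0 : ℝ) < a) (hz : z ∈ carpetSquare a N U V) (p q : ℝ) :
    |2 * (a : ℝ) ^ N * (q * z.2 - p * z.1) - (q * (2 * V + 1) - p * (2 * U + 1))| ≤
      (|p| + |q|) / a := by
  have hc : (0 : ℝ) < 2 * (a : ℝ) ^ N := by positivity
  have hce : 2 * (a : ℝ) ^ N * (1 / (2 * (a : ℝ) ^ (N + 1))) = 1 / a := by
    field_simp
    ring
  have hx := abs_mul_sub_le_of_abs_sub_div_le hc hz.1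
  have hy := abs_mul_sub_le_of_abs_sub_div_le hc hz.2
  rw [hce] at hx hy
  set dx := 2 * (a : ℝ) ^ N * z.1 - (2 * U + 1)
  set dy := 2 * (a : ℝ) ^ N * z.2 - (2 * V + 1)
  calc _ = |q * dy - p * dx| := by simp only [dx, dy]; ring_nf
    _ ≤ |q| * |dy| + |p| * |dx| := by
          rw [← abs_mul, ← abs_mul]
          exact abs_sub _ _
    _ ≤ |q| * (1 / a) + |p| * (1 / a) := by gcongr
    _ = (|p| + |q|) / a := by ring

theorem two_mul_pow_mul_sub_eq_of_mem_line {a p q k : ℤ} {m N : ℕ} (ha : (a : ℝ) ≠ 0)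
    (hmN : m ≤ N) {z : ℝ × ℝ} (hz : (q : ℝ) * z.2 = p * (z.1 - k / (a : ℝ) ^ m)) :
    2 * (a : ℝ) ^ N * (q * z.2 - p * z.1) = ((-(2 * (p * k * a ^ (N - m))) : ℤ) : ℝ) := by
  have hpow : (a : ℝ) ^ N = (a : ℝ) ^ m * (a : ℝ) ^ (N - m) := by
    rw [← pow_add, Nat.add_sub_cancel' hmN]
  rw [hz, hpow]
  push_cast
  field_simp
  ring

theorem Int.odd_mul_sub_mul_of_odd_add_s12 {p q u v : ℤ} (hpq : Odd (p + q)) (hu : Odd u)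
    (hv : Odd v) : Odd (q * v - p * u) := by
  rw [Int.odd_add, ← Int.not_odd_iff_even] at hpq
  rw [Int.odd_sub, Int.odd_mul, ← Int.not_odd_iff_even, Int.odd_mul]
  tauto

theorem Int.one_le_abs_sub_cast_of_even_of_odd {m n : ℤ} (hm : Even m) (hn : Odd n) :
    (1 : ℝ) ≤ |(m : ℝ) - n| := by
  have hne : m - n ≠ 0 := fun h => by
    rw [sub_eq_zero.mp h] at hm
    exact Int.not_even_iff_odd.mpr hn hm
  exact_mod_cast Int.one_le_abs hne

theorem Aslope_old_shifted_line_disjoint_from_small_peripheral_squares_general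
    (a p q : ℤ) (ha : 3 ≤ a)
    (hp : 0 ≤ p) (hpq : p < q) (hodd : Odd (p + q)) (hsum : p + q ≤ a - 2)
    (m : ℕ) (k : ℤ) :
    ∀ (N : ℕ), m ≤ N → ∀ (U V : ℤ),
      Disjoint
        {z : ℝ × ℝ | (q : ℝ) * z.2 = (p : ℝ) * (z.1 - (k : ℝ) / (a : ℝ) ^ m)}
        (carpetSquare a N U V) := by
  intro N hmN U V
  refine Set.disjoint_left.mpr fun z hline hsq => ?_
  have ha0 : (0 : ℝ) < a := by exact_mod_cast lt_of_lt_of_le (by norm_num) ha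
  have hclose := abs_scaled_sub_center_le_of_mem_carpetSquare ha0 hsq p q
  rw [two_mul_pow_mul_sub_eq_of_mem_line ha0.ne' hmN hline] at hclose
  have hfar := Int.one_le_abs_sub_cast_of_even_of_odd (even_two_mul (p * k * a ^ (N - m))).neg
    (Int.odd_mul_sub_mul_of_odd_add_s12 hodd (odd_two_mul_add_one U) (odd_two_mul_add_one V))
  have hsmall : (|(p : ℝ)| + |(q : ℝ)|) / a < 1 := by
    rw [div_lt_one ha0, abs_of_nonneg (by exact_mod_cast hp),
      abs_of_nonneg (by exact_mod_cast hp.trans hpq.le)]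
    exact_mod_cast (by omega : p + q < a)
  push_cast at hfar hclose
  linarith

theorem Aslope_old_shifted_line_disjoint_from_small_peripheral_squares
    (a p q : ℤ) (ha_odd : Odd a) (ha : 3 ≤ a)
    (hp : 0 ≤ p) (hpq : p < q) (hodd : Odd (p + q)) (hsum : p + q ≤ a - 2)
    (m : ℕ) (k : ℤ) :
    ∀ (N : ℕ), m ≤ N → ∀ (U V : ℤ),
      Disjoint
        {z : ℝ × ℝ | (q : ℝ) * z.2 = (p : ℝ) * (z.1 - (k : ℝ) / (a : ℝ) ^ m)}
        (carpetSquare a N U V) :=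
  Aslope_old_shifted_line_disjoint_from_small_peripheral_squares_general a p q ha hp hpq hodd hsum m
    k
end

section
/- Let F : ℝ → ℝ be the folding map F(s) = the distance from s to the nearest even integer (so F is 2-periodic, takes values in [0,1], F(s) = s for s ∈ [0,1] and F(s) = 2 − s for s ∈ [1,2]). Let a ≥ 3 be an odd integer and let p, q be integers with 0 ≤ p < q, p + q odd, and p + q ≤ a − 2. Then for every real number t, every natural number N, and all integers U, V, the point (F(q·t), F(p·t)) does not lie in the closed square Q(a,N,U,V); moreover (F(q·(t+2)), F(p·(t+2))) = (F(q·t), F(p·t)) for all t. Consequently the billiard trajectory in the unit square starting at (0,0) with direction vector (q,p), whose position is (F(q·t), F(p·t)), is periodic and avoids all peripheral squares of every prefractal approximation S_{a,N} of the self-similar Sierpinski carpet S_a. -/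
/-- The folding map: `fold s` is the distance from `s` to the nearest even
integer.  It is 2-periodic, takes values in `[0,1]`, `fold s = s` for
`s ∈ [0,1]` and `fold s = 2 - s` for `s ∈ [1,2]`. -/
noncomputable def fold (s : ℝ) : ℝ := |s - 2 * round (s / 2)|

theorem fold_periodic : Function.Periodic fold 2 := by
  intro s
  rw [fold, fold, add_div, div_self two_ne_zero, round_add_one]
  push_cast
  ring_nf

theorem exists_fold_eq_sign_mul_add (s : ℝ) :
    ∃ ε m : ℤ, |ε| = 1 ∧ fold s = ε * s + 2 * m := by
  rcases abs_choice (s - 2 * round (s / 2)) with h | h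
  · exact ⟨1, -round (s / 2), abs_one, by rw [fold, h]; push_cast; ring⟩
  · exact ⟨-1, round (s / 2), by simp, by rw [fold, h]; push_cast; ring⟩

theorem exists_mul_fold_add_mul_fold_eq_intCast (p q : ℤ) (t : ℝ) :
    ∃ c d m : ℤ, |c| = |p| ∧ |d| = |q| ∧ c * fold (q * t) + d * fold (p * t) = m := by
  obtain ⟨ε, k, hε, hk⟩ := exists_fold_eq_sign_mul_add (q * t)
  obtain ⟨δ, l, hδ, hl⟩ := exists_fold_eq_sign_mul_add (p * t)
  have hε_sq : (ε : ℝ) * ε = 1 := by exact_mod_cast (abs_mul_abs_self ε).symm.trans (by simp [hε])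
  have hδ_sq : (δ : ℝ) * δ = 1 := by exact_mod_cast (abs_mul_abs_self δ).symm.trans (by simp [hδ])
  refine ⟨ε * p, -(δ * q), 2 * (ε * p * k - δ * q * l), by simp [abs_mul, hε],
    by simp [abs_mul, hδ], ?_⟩
  rw [hk, hl]
  push_cast
  linear_combination (p * q * t : ℝ) * hε_sq - (p * q * t : ℝ) * hδ_sq

theorem mul_add_mul_ne_intCast_of_mem_carpetSquare {a c d : ℤ} (hcd : Odd (c + d))
    (hlt : |c| + |d| < a) {N : ℕ} {U V : ℤ} {z : ℝ × ℝ} (hz : z ∈ carpetSquare a N U V)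
    (m : ℤ) : c * z.1 + d * z.2 ≠ m := by
  intro hm
  obtain ⟨hx, hy⟩ := hz
  have ha : (0 : ℝ) < a := by
    exact_mod_cast (add_nonneg (abs_nonneg c) (abs_nonneg d)).trans_lt hlt
  set J : ℤ := 2 * a ^ N * m - (c * (2 * U + 1) + d * (2 * V + 1)) with hJ
  have hJ_odd : Odd J := by
    obtain ⟨r, hr⟩ := hcd
    exact ⟨a ^ N * m - c * U - d * V - r - 1, by rw [hJ]; linear_combination -hr⟩
  have hJ_eq : (J : ℝ) = 2 * a ^ N * (c * (z.1 - (2 * U + 1) / (2 * a ^ N)) +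
      d * (z.2 - (2 * V + 1) / (2 * a ^ N))) := by
    rw [hJ]
    push_cast
    field_simp
    linear_combination (-2 * (a : ℝ) ^ N) * hm
  have hJ_abs : |(J : ℝ)| < 1 := calc
    |(J : ℝ)| ≤ 2 * a ^ N * (|(c : ℝ)| * (1 / (2 * a ^ (N + 1))) +
        |(d : ℝ)| * (1 / (2 * a ^ (N + 1)))) := by
      rw [hJ_eq, abs_mul, abs_of_pos (by positivity)]
      gcongr
      refine (abs_add_le _ _).trans ?_
      rw [abs_mul, abs_mul]
      gcongr
    _ = (|(c : ℝ)| + |(d : ℝ)|) / a := by rw [pow_succ]; field_simp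
    _ < 1 := by rw [div_lt_one ha]; exact_mod_cast hlt
  have hJ_zero : J = 0 := Int.abs_lt_one_iff.mp (by exact_mod_cast hJ_abs)
  exact Int.not_even_iff_odd.mpr hJ_odd (hJ_zero ▸ Even.zero)

theorem billiard_orbit_periodic_and_avoids_peripheral_squares_general
    (a p q : ℤ)
    (hp : 0 ≤ p) (hpq : p < q) (hodd : Odd (p + q)) (hsum : p + q ≤ a - 2) :
    (∀ (t : ℝ) (N : ℕ) (U V : ℤ),
        (fold ((q : ℝ) * t), fold ((p : ℝ) * t)) ∉ carpetSquare a N U V) ∧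
    (∀ t : ℝ,
        (fold ((q : ℝ) * (t + 2)), fold ((p : ℝ) * (t + 2))) =
          (fold ((q : ℝ) * t), fold ((p : ℝ) * t))) := by
  refine ⟨fun t N U V hmem => ?_, fun t => ?_⟩
  · obtain ⟨c, d, m, hc, hd, hm⟩ := exists_mul_fold_add_mul_fold_eq_intCast p q t
    have hcd : Odd (c + d) := by
      rwa [Int.odd_add, ← odd_abs, ← even_abs, hc, hd, odd_abs, even_abs, ← Int.odd_add]
    have hlt : |c| + |d| < a := by
      rw [hc, hd, abs_of_nonneg hp, abs_of_pos (hp.trans_lt hpq)]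
      omega
    exact mul_add_mul_ne_intCast_of_mem_carpetSquare hcd hlt hmem m hm
  · simp only [mul_add, Prod.mk.injEq]
    exact ⟨fold_periodic.int_mul q (q * t), fold_periodic.int_mul p (p * t)⟩

theorem billiard_orbit_periodic_and_avoids_peripheral_squares
    (a p q : ℤ) (ha_odd : Odd a) (ha : 3 ≤ a)
    (hp : 0 ≤ p) (hpq : p < q) (hodd : Odd (p + q)) (hsum : p + q ≤ a - 2) :
    (∀ (t : ℝ) (N : ℕ) (U V : ℤ),
        (fold ((q : ℝ) * t), fold ((p : ℝ) * t)) ∉ carpetSquare a N U V) ∧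
    (∀ t : ℝ,
        (fold ((q : ℝ) * (t + 2)), fold ((p : ℝ) * (t + 2))) =
          (fold ((q : ℝ) * t), fold ((p : ℝ) * t))) :=
  billiard_orbit_periodic_and_avoids_peripheral_squares_general a p q hp hpq hodd hsum
end
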